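/- Under the stated hypotheses, with λ ∈ (0, 2α) and {α_n} ⊂ [0,1] satisfying limsup_{n→∞} α_n < 1, for the sequence generated by: x_0 ∈ H; z_n = P_C x_n; u_n^k = P_C(z_n - λ A_k z_n) (k = 1,…,M); k_n attaining max{‖u_n^k - x_n‖ : k = 1,…,M} and ū_n = u_n^{k_n}; y_n^i = α_n ū_n + (1-α_n) S_i ū_n (i = 1,…,N); i_n attaining max{‖y_n^i - x_n‖ : i = 1,…,N} and ȳ_n = y_n^{i_n}; C_n = {v ∈ H : ‖v - ȳ_n‖ ≤ ‖v - x_n‖}; Q_n = {v ∈ H : ⟨x_0 - x_n, x_n - v⟩ ≥ 0}; x_{n+1} = P_{C_n ∩ Q_n} x_0, one has lim_{n→∞} ‖z_n - S_i z_n‖ = 0 for every i = 1,…,N, where z_n = P_C x_n. -/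
import Mathlib


open Filter Topology
open scoped RealInnerProductSpace

/-- `p` is the metric projection of `x` onto the set `D`:
it belongs to `D` and minimizes the distance to `x` over `D`. -/
def IsMetricProj {H : Type*} [NormedAddCommGroup H] [InnerProductSpace ℝ H]
    (D : Set H) (x p : H) : Prop :=
  p ∈ D ∧ ∀ w ∈ D, ‖p - x‖ ≤ ‖w - x‖

section helpers
variable {H : Type*} [NormedAddCommGroup H] [InnerProductSpace ℝ H]

lemma proj_inner_le {D : Set H} (hD : Convex ℝ D) {x p : H}
    (hp : IsMetricProj D x p) : ∀ w ∈ D, ⟪x - p, w - p⟫ ≤ 0 := by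
  intro w hw
  by_contra hc
  push_neg at hc
  set c : ℝ := ⟪x - p, w - p⟫ with hcdef
  set q : ℝ := ‖w - p‖ ^ 2 with hqdef
  have hq : 0 < q := by
    rcases eq_or_ne w p with rfl | hne
    · simp [hcdef] at hc
    · have h0 : w - p ≠ 0 := sub_ne_zero_of_ne hne
      have h1 : (0:ℝ) < ‖w - p‖ := norm_pos_iff.2 h0
      rw [hqdef]
      positivity
  set t : ℝ := min 1 (c / q) with htdef
  have ht0 : 0 < t := lt_min one_pos (div_pos hc hq)
  have ht1 : t ≤ 1 := min_le_left _ _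
  have htq : t * q ≤ c := by
    have : t ≤ c / q := min_le_right _ _
    calc t * q ≤ (c / q) * q := by nlinarith
    _ = c := by field_simp
  have hmem : p + t • (w - p) ∈ D := by
    have h := hD hp.1 hw (sub_nonneg.2 ht1) ht0.le (by ring)
    have : (1 - t) • p + t • w = p + t • (w - p) := by
      rw [smul_sub, sub_smul, one_smul]; abel
    rwa [this] at h
  have h2 := hp.2 _ hmem
  have expand : ‖p + t • (w - p) - x‖ ^ 2 = ‖p - x‖ ^ 2 - 2 * t * c + t ^ 2 * q := by
    have he : p + t • (w - p) - x = (p - x) + t • (w - p) := by abel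
    rw [he, norm_add_sq_real, real_inner_smul_right, norm_smul, Real.norm_eq_abs,
      abs_of_pos ht0, mul_pow]
    have : ⟪p - x, w - p⟫ = -c := by
      rw [hcdef, ← inner_neg_left, neg_sub]
    rw [this]; ring
  have hsq : ‖p - x‖ ^ 2 ≤ ‖p + t • (w - p) - x‖ ^ 2 := by
    nlinarith [norm_nonneg (p - x), norm_nonneg (p + t • (w - p) - x)]
  rw [expand] at hsq
  nlinarith

lemma proj_dist_le {D : Set H} (hD : Convex ℝ D) {x z p : H}
    (h : IsMetricProj D x z) (hpD : p ∈ D) : ‖z - p‖ ≤ ‖x - p‖ := by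
  have h1 := proj_inner_le hD h p hpD
  have expand : ‖x - p‖ ^ 2 = ‖x - z‖ ^ 2 - 2 * ⟪x - z, p - z⟫ + ‖p - z‖ ^ 2 := by
    have : x - p = (x - z) - (p - z) := by abel
    rw [this, norm_sub_sq_real]
  have h2 : ‖p - z‖ ^ 2 ≤ ‖x - p‖ ^ 2 := by nlinarith [norm_nonneg (x - z)]
  have h3 : ‖z - p‖ = ‖p - z‖ := norm_sub_rev _ _
  nlinarith [norm_nonneg (z - p), norm_nonneg (x - p)]

lemma tendsto_of_sq_tendsto {f : ℕ → ℝ} (hf : ∀ n, 0 ≤ f n)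
    (h : Filter.Tendsto (fun n => f n ^ 2) Filter.atTop (nhds 0)) :
    Filter.Tendsto f Filter.atTop (nhds 0) := by
  have := (Real.continuous_sqrt.tendsto 0).comp h
  simp only [Real.sqrt_zero] at this
  refine this.congr fun n => ?_
  simp [Function.comp, Real.sqrt_sq (hf n)]

end helpers

set_option maxHeartbeats 1000000 in
theorem zn_asymptotic_fixed_points
    {H : Type*} [NormedAddCommGroup H] [InnerProductSpace ℝ H] [CompleteSpace H]
    -- `C` is a nonempty closed convex subset of `H`
    (C : Set H) (hCne : C.Nonempty) (hCcl : IsClosed C) (hCcv : Convex ℝ C)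
    (M N : ℕ)
    -- the mappings `A_k : C → H` are `α`-inverse strongly monotone
    (α : ℝ) (hα : 0 < α) (A : Fin M → H → H)
    (hA : ∀ k, ∀ p ∈ C, ∀ q ∈ C, α * ‖A k p - A k q‖ ^ 2 ≤ ⟪A k p - A k q, p - q⟫)
    -- the mappings `S_i : C → C` are nonexpansive
    (S : Fin N → H → H) (hSmap : ∀ i, ∀ p ∈ C, S i p ∈ C)
    (hS : ∀ i, ∀ p ∈ C, ∀ q ∈ C, ‖S i p - S i q‖ ≤ ‖p - q‖)
    -- parameters: `λ ∈ (0, 2α)`, `{α_n} ⊂ [0,1]` with `limsup α_n < 1`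
    (lam : ℝ) (hlam : lam ∈ Set.Ioo 0 (2 * α))
    (a : ℕ → ℝ) (ha : ∀ n, a n ∈ Set.Icc (0 : ℝ) 1)
    (ha' : Filter.limsup a Filter.atTop < 1)
    -- `F = (∩ F(S_i)) ∩ (∩ VI(A_k, C))` is nonempty
    (F : Set H)
    (hF : F = {p | p ∈ C ∧ (∀ i, S i p = p) ∧ (∀ k, ∀ q ∈ C, 0 ≤ ⟪A k p, q - p⟫)})
    (hFne : F.Nonempty)
    -- the algorithm
    (x : ℕ → H) (z : ℕ → H) (uu : ℕ → Fin M → H) (y : ℕ → Fin N → H)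
    (kn : ℕ → Fin M) (inn : ℕ → Fin N)
    (Cn Qn : ℕ → Set H)
    -- `z_n = P_C x_n`
    (hz : ∀ n, IsMetricProj C (x n) (z n))
    -- `u_n^k = P_C(z_n - λ A_k z_n)`
    (hu : ∀ n k, IsMetricProj C (z n - lam • A k (z n)) (uu n k))
    -- `k_n` attains `max{‖u_n^k - x_n‖}`, `ū_n = u_n^{k_n}`
    (hkn : ∀ n k, ‖uu n k - x n‖ ≤ ‖uu n (kn n) - x n‖)
    -- `y_n^i = α_n ū_n + (1 - α_n) S_i ū_n`
    (hy : ∀ n i, y n i = a n • uu n (kn n) + (1 - a n) • S i (uu n (kn n)))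
    -- `i_n` attains `max{‖y_n^i - x_n‖}`, `ȳ_n = y_n^{i_n}`
    (hin : ∀ n i, ‖y n i - x n‖ ≤ ‖y n (inn n) - x n‖)
    -- `C_n = {v : ‖v - ȳ_n‖ ≤ ‖v - x_n‖}`
    (hCn : ∀ n, Cn n = {v | ‖v - y n (inn n)‖ ≤ ‖v - x n‖})
    -- `Q_n = {v : ⟨x_0 - x_n, x_n - v⟩ ≥ 0}`
    (hQn : ∀ n, Qn n = {v | 0 ≤ ⟪x 0 - x n, x n - v⟫})
    -- `x_{n+1} = P_{C_n ∩ Q_n} x_0`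
    (hx : ∀ n, IsMetricProj (Cn n ∩ Qn n) (x 0) (x (n + 1)))
    :
    ∀ i, Filter.Tendsto (fun n => ‖z n - S i (z n)‖) Filter.atTop (nhds 0) := by
  intro i
  obtain ⟨p, hpF⟩ := hFne
  rw [hF] at hpF
  obtain ⟨hpC, hSfix, hVI⟩ := hpF
  obtain ⟨hlam0, hlam2⟩ := hlam
  -- memberships
  have hzC : ∀ n, z n ∈ C := fun n => (hz n).1
  have huC : ∀ n k, uu n k ∈ C := fun n k => (hu n k).1
  have hSuC : ∀ n j, S j (uu n (kn n)) ∈ C := fun n j => hSmap j _ (huC n (kn n))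
  have hyC : ∀ n j, y n j ∈ C := by
    intro n j
    rw [hy]
    exact hCcv (huC n (kn n)) (hSuC n j) (ha n).1 (by linarith [(ha n).2]) (by ring)
  -- key firm-nonexpansiveness inequality
  have key : ∀ n k, ‖uu n k - p‖ ^ 2
      ≤ ⟪(z n - p) - lam • (A k (z n) - A k p), uu n k - p⟫ := by
    intro n k
    have h1 := proj_inner_le hCcv (hu n k) p hpC
    have h2 : 0 ≤ ⟪A k p, uu n k - p⟫ := hVI k _ (huC n k)
    have h1' : 0 ≤ ⟪(z n - lam • A k (z n)) - uu n k, uu n k - p⟫ := by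
      have e : ⟪(z n - lam • A k (z n)) - uu n k, uu n k - p⟫
          = -⟪(z n - lam • A k (z n)) - uu n k, p - uu n k⟫ := by
        rw [← inner_neg_right, neg_sub]
      rw [e]; linarith
    have e1 : (z n - p) - lam • (A k (z n) - A k p)
        = ((z n - lam • A k (z n)) - uu n k) + (uu n k - p) + lam • A k p := by
      rw [smul_sub]; abel
    rw [e1, inner_add_left, inner_add_left, real_inner_smul_left,
      real_inner_self_eq_norm_sq]
    nlinarith
  -- estimate (i)
  have est1 : ∀ n k, ‖uu n k - p‖ ^ 2
      ≤ ‖z n - p‖ ^ 2 + lam * (lam - 2 * α) * ‖A k (z n) - A k p‖ ^ 2 := by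
    intro n k
    set w : H := (z n - p) - lam • (A k (z n) - A k p) with hw
    have ew : ‖w‖ ^ 2 = ‖z n - p‖ ^ 2 - 2 * lam * ⟪z n - p, A k (z n) - A k p⟫
        + lam ^ 2 * ‖A k (z n) - A k p‖ ^ 2 := by
      rw [hw, norm_sub_sq_real, real_inner_smul_right, norm_smul, Real.norm_eq_abs,
        abs_of_pos hlam0, mul_pow]
      ring
    have hmono := hA k (z n) (hzC n) p hpC
    have hcomm : ⟪z n - p, A k (z n) - A k p⟫ = ⟪A k (z n) - A k p, z n - p⟫ :=
      real_inner_comm _ _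
    have hk := key n k
    have hcs := real_inner_le_norm w (uu n k - p)
    have hle : ‖uu n k - p‖ ≤ ‖w‖ := by
      nlinarith [norm_nonneg w, norm_nonneg (uu n k - p)]
    nlinarith [norm_nonneg w, norm_nonneg (uu n k - p)]
  -- estimate (ii)
  have est2 : ∀ n, ‖z n - uu n (kn n)‖ ^ 2
      ≤ ‖z n - p‖ ^ 2 - ‖uu n (kn n) - p‖ ^ 2
        + 2 * lam * ‖z n - uu n (kn n)‖ * ‖A (kn n) (z n) - A (kn n) p‖ := by
    intro n
    set k := kn n with hkdef
    set w : H := (z n - p) - lam • (A k (z n) - A k p) with hw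
    have hk := key n k
    have e0 : ‖w - (uu n k - p)‖ ^ 2
        = ‖w‖ ^ 2 - 2 * ⟪w, uu n k - p⟫ + ‖uu n k - p‖ ^ 2 := norm_sub_sq_real _ _
    have e1 : w - (uu n k - p) = (z n - uu n k) - lam • (A k (z n) - A k p) := by
      rw [hw]; abel
    have e2 : ‖(z n - uu n k) - lam • (A k (z n) - A k p)‖ ^ 2
        = ‖z n - uu n k‖ ^ 2 - 2 * lam * ⟪z n - uu n k, A k (z n) - A k p⟫
          + lam ^ 2 * ‖A k (z n) - A k p‖ ^ 2 := by
      rw [norm_sub_sq_real, real_inner_smul_right, norm_smul, Real.norm_eq_abs,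
        abs_of_pos hlam0, mul_pow]
      ring
    have e3 : ‖w‖ ^ 2 = ‖z n - p‖ ^ 2 - 2 * lam * ⟪z n - p, A k (z n) - A k p⟫
        + lam ^ 2 * ‖A k (z n) - A k p‖ ^ 2 := by
      rw [hw, norm_sub_sq_real, real_inner_smul_right, norm_smul, Real.norm_eq_abs,
        abs_of_pos hlam0, mul_pow]
      ring
    have hmono := hA k (z n) (hzC n) p hpC
    have hcomm : ⟪z n - p, A k (z n) - A k p⟫ = ⟪A k (z n) - A k p, z n - p⟫ :=
      real_inner_comm _ _
    have hcs : ⟪z n - uu n k, A k (z n) - A k p⟫ ≤ ‖z n - uu n k‖ * ‖A k (z n) - A k p‖ :=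
      real_inner_le_norm _ _
    have f1 : lam * (α * ‖A k (z n) - A k p‖ ^ 2) ≤ lam * ⟪A k (z n) - A k p, z n - p⟫ :=
      mul_le_mul_of_nonneg_left hmono hlam0.le
    have f2 : lam * ⟪z n - uu n k, A k (z n) - A k p⟫
        ≤ lam * (‖z n - uu n k‖ * ‖A k (z n) - A k p‖) :=
      mul_le_mul_of_nonneg_left hcs hlam0.le
    have f3 : 0 ≤ lam * (α * ‖A k (z n) - A k p‖ ^ 2) := by positivity
    have hsq : 0 ≤ ‖w - (uu n k - p)‖ ^ 2 := sq_nonneg _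
    rw [e1, e2] at e0
    nlinarith
  -- basic distance comparisons
  have hzp : ∀ n, ‖z n - p‖ ≤ ‖x n - p‖ := fun n => proj_dist_le hCcv (hz n) hpC
  have hup : ∀ n k, ‖uu n k - p‖ ≤ ‖z n - p‖ := by
    intro n k
    have h := est1 n k
    nlinarith [sq_nonneg ‖A k (z n) - A k p‖, norm_nonneg (uu n k - p),
      norm_nonneg (z n - p), mul_pos hlam0 (show (0:ℝ) < 2 * α - lam by linarith),
      mul_nonneg (mul_nonneg hlam0.le (show (0:ℝ) ≤ 2 * α - lam by linarith))
        (sq_nonneg ‖A k (z n) - A k p‖)]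
  have hyp : ∀ n j, ‖y n j - p‖ ≤ ‖uu n (kn n) - p‖ := by
    intro n j
    rw [hy]
    have e : a n • uu n (kn n) + (1 - a n) • S j (uu n (kn n)) - p
        = a n • (uu n (kn n) - p) + (1 - a n) • (S j (uu n (kn n)) - p) := by
      rw [smul_sub, smul_sub, sub_smul, sub_smul, one_smul, one_smul]; abel
    rw [e]
    have hSle : ‖S j (uu n (kn n)) - p‖ ≤ ‖uu n (kn n) - p‖ := by
      have h := hS j (uu n (kn n)) (huC n (kn n)) p hpC
      rwa [hSfix j] at h
    calc ‖a n • (uu n (kn n) - p) + (1 - a n) • (S j (uu n (kn n)) - p)‖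
        ≤ ‖a n • (uu n (kn n) - p)‖ + ‖(1 - a n) • (S j (uu n (kn n)) - p)‖ :=
          norm_add_le _ _
      _ = a n * ‖uu n (kn n) - p‖ + (1 - a n) * ‖S j (uu n (kn n)) - p‖ := by
          rw [norm_smul, norm_smul, Real.norm_eq_abs, Real.norm_eq_abs,
            abs_of_nonneg (ha n).1, abs_of_nonneg (by linarith [(ha n).2])]
      _ ≤ a n * ‖uu n (kn n) - p‖ + (1 - a n) * ‖uu n (kn n) - p‖ := by
          have h1 : (0:ℝ) ≤ 1 - a n := by linarith [(ha n).2]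
          nlinarith
      _ = ‖uu n (kn n) - p‖ := by ring
  have hpCn : ∀ n, p ∈ Cn n := by
    intro n
    rw [hCn]
    show ‖p - y n (inn n)‖ ≤ ‖p - x n‖
    rw [norm_sub_rev p (y n (inn n)), norm_sub_rev p (x n)]
    exact le_trans (hyp n (inn n)) (le_trans (hup n (kn n)) (hzp n))
  -- convexity of the half-spaces
  have hCnconv : ∀ n, Convex ℝ (Cn n) := by
    intro n
    rw [hCn]
    have he : {v : H | ‖v - y n (inn n)‖ ≤ ‖v - x n‖}
        = {v : H | ⟪v, x n - y n (inn n)⟫ ≤ (‖x n‖ ^ 2 - ‖y n (inn n)‖ ^ 2) / 2} := by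
      ext v
      simp only [Set.mem_setOf_eq]
      rw [inner_sub_right]
      constructor
      · intro h
        have h2 : ‖v - y n (inn n)‖ ^ 2 ≤ ‖v - x n‖ ^ 2 := by
          nlinarith [norm_nonneg (v - y n (inn n)), norm_nonneg (v - x n)]
        rw [norm_sub_sq_real, norm_sub_sq_real] at h2
        linarith
      · intro h
        have h2 : ‖v - y n (inn n)‖ ^ 2 ≤ ‖v - x n‖ ^ 2 := by
          rw [norm_sub_sq_real, norm_sub_sq_real]
          linarith
        nlinarith [norm_nonneg (v - y n (inn n)), norm_nonneg (v - x n)]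
    rw [he]
    exact convex_halfSpace_le (𝕜 := ℝ)
      (f := fun v : H => ⟪v, x n - y n (inn n)⟫)
      ⟨fun u v => inner_add_left _ _ _, fun c v => real_inner_smul_left _ _ _⟩ _
  have hQnconv : ∀ n, Convex ℝ (Qn n) := by
    intro n
    rw [hQn]
    have he : {v : H | 0 ≤ ⟪x 0 - x n, x n - v⟫}
        = {v : H | ⟪x 0 - x n, v⟫ ≤ ⟪x 0 - x n, x n⟫} := by
      ext v
      simp only [Set.mem_setOf_eq, inner_sub_right]
      constructor <;> intro <;> linarith
    rw [he]
    exact convex_halfSpace_le (𝕜 := ℝ)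
      (f := fun v : H => ⟪x 0 - x n, v⟫)
      ⟨fun u v => inner_add_right _ _ _, fun c v => real_inner_smul_right _ _ _⟩ _
  have hpQn : ∀ n, p ∈ Qn n := by
    intro n
    induction n with
    | zero => rw [hQn]; simp
    | succ n ih =>
      rw [hQn]
      have hconv := (hCnconv n).inter (hQnconv n)
      have h := proj_inner_le hconv (hx n) p ⟨hpCn n, ih⟩
      show (0:ℝ) ≤ ⟪x 0 - x (n + 1), x (n + 1) - p⟫
      have e : ⟪x 0 - x (n + 1), x (n + 1) - p⟫
          = -⟪x 0 - x (n + 1), p - x (n + 1)⟫ := by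
        rw [← inner_neg_right, neg_sub]
      rw [e]; linarith
  -- geometry of Q_n
  have hQgeom : ∀ n, ∀ v ∈ Qn n,
      ‖x n - x 0‖ ^ 2 + ‖v - x n‖ ^ 2 ≤ ‖v - x 0‖ ^ 2 := by
    intro n v hv
    rw [hQn] at hv
    have e : ‖v - x 0‖ ^ 2
        = ‖v - x n‖ ^ 2 + 2 * ⟪v - x n, x n - x 0⟫ + ‖x n - x 0‖ ^ 2 := by
      have e' : v - x 0 = (v - x n) + (x n - x 0) := by abel
      rw [e', norm_add_sq_real]
    have e2 : ⟪v - x n, x n - x 0⟫ = ⟪x 0 - x n, x n - v⟫ := by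
      rw [show v - x n = -(x n - v) by abel, show x n - x 0 = -(x 0 - x n) by abel,
        inner_neg_neg, real_inner_comm]
    rw [e2] at e
    have hv' : (0:ℝ) ≤ ⟪x 0 - x n, x n - v⟫ := hv
    linarith
  have hx1mem : ∀ n, x (n + 1) ∈ Cn n ∩ Qn n := fun n => (hx n).1
  have hxbound : ∀ n, ‖x n - x 0‖ ≤ ‖p - x 0‖ := by
    intro n
    cases n with
    | zero => simp [norm_nonneg]
    | succ n => exact (hx n).2 p ⟨hpCn n, hpQn n⟩
  -- monotone bounded convergence of ‖x n - x 0‖²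
  have hmonos : Monotone fun n => ‖x n - x 0‖ ^ 2 := by
    apply monotone_nat_of_le_succ
    intro n
    have h := hQgeom n (x (n + 1)) (hx1mem n).2
    nlinarith [sq_nonneg ‖x (n + 1) - x n‖]
  have hbdds : BddAbove (Set.range fun n => ‖x n - x 0‖ ^ 2) := by
    refine ⟨‖p - x 0‖ ^ 2, ?_⟩
    rintro _ ⟨n, rfl⟩
    show ‖x n - x 0‖ ^ 2 ≤ ‖p - x 0‖ ^ 2
    have := hxbound n
    nlinarith [norm_nonneg (x n - x 0)]
  have hL := tendsto_atTop_ciSup hmonos hbdds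
  have hdiff : Tendsto (fun n => ‖x (n + 1) - x 0‖ ^ 2 - ‖x n - x 0‖ ^ 2) atTop (𝓝 0) := by
    have h1 := (hL.comp (tendsto_add_atTop_nat 1)).sub hL
    simpa using h1
  have dxx_sq : Tendsto (fun n => ‖x (n + 1) - x n‖ ^ 2) atTop (𝓝 0) := by
    apply squeeze_zero (fun n => sq_nonneg _) (fun n => ?_) hdiff
    have := hQgeom n (x (n + 1)) (hx1mem n).2
    linarith
  have dxx : Tendsto (fun n => ‖x (n + 1) - x n‖) atTop (𝓝 0) :=
    tendsto_of_sq_tendsto (fun n => norm_nonneg _) dxx_sq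
  -- ‖ȳ_n - x_n‖ → 0
  have dyx : Tendsto (fun n => ‖y n (inn n) - x n‖) atTop (𝓝 0) := by
    apply squeeze_zero (fun n => norm_nonneg _) (fun n => ?_)
      (by simpa using dxx.const_mul 2)
    have h1 : ‖x (n + 1) - y n (inn n)‖ ≤ ‖x (n + 1) - x n‖ := by
      have h := (hx1mem n).1
      rw [hCn] at h
      exact h
    have h2 : ‖y n (inn n) - x n‖ ≤ ‖y n (inn n) - x (n + 1)‖ + ‖x (n + 1) - x n‖ := by
      have := norm_add_le (y n (inn n) - x (n + 1)) (x (n + 1) - x n)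
      simpa using this
    rw [norm_sub_rev] at h1
    linarith
  -- bounds
  set B : ℝ := 2 * ‖p - x 0‖ with hB
  have hBx : ∀ n, ‖x n - p‖ ≤ B := by
    intro n
    have h1 : ‖x n - p‖ ≤ ‖x n - x 0‖ + ‖x 0 - p‖ := by
      have := norm_add_le (x n - x 0) (x 0 - p)
      simpa using this
    have h2 : ‖x 0 - p‖ = ‖p - x 0‖ := norm_sub_rev _ _
    rw [hB]; linarith [hxbound n]
  have hBz : ∀ n, ‖z n - p‖ ≤ B := fun n => (hzp n).trans (hBx n)
  have hBu : ∀ n, ‖uu n (kn n) - p‖ ≤ B := fun n => (hup n (kn n)).trans (hBz n)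
  have hBy : ∀ n, ‖y n (inn n) - p‖ ≤ B := fun n => (hyp n (inn n)).trans (hBu n)
  have hB0 : 0 ≤ B := by rw [hB]; positivity
  -- difference of squares bound
  have hDle : ∀ n, ‖x n - p‖ ^ 2 - ‖y n (inn n) - p‖ ^ 2
      ≤ 2 * B * ‖y n (inn n) - x n‖ := by
    intro n
    have h1 : ‖x n - p‖ - ‖y n (inn n) - p‖ ≤ ‖y n (inn n) - x n‖ := by
      have h := norm_sub_norm_le (x n - p) (y n (inn n) - p)
      have e : (x n - p) - (y n (inn n) - p) = x n - y n (inn n) := by abel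
      rw [e, norm_sub_rev (x n) (y n (inn n))] at h
      linarith
    nlinarith [hBx n, hBy n, norm_nonneg (y n (inn n) - p), norm_nonneg (x n - p),
      norm_nonneg (y n (inn n) - x n)]
  -- δ_n → 0
  have hposc : (0:ℝ) < lam * (2 * α - lam) := mul_pos hlam0 (by linarith)
  have dδsq : Tendsto (fun n => ‖A (kn n) (z n) - A (kn n) p‖ ^ 2) atTop (𝓝 0) := by
    have hgt : Tendsto (fun n => (2 * B * ‖y n (inn n) - x n‖) / (lam * (2 * α - lam)))
        atTop (𝓝 0) := by
      have h := (dyx.const_mul (2 * B)).div_const (lam * (2 * α - lam))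
      simpa using h
    refine squeeze_zero (fun n => sq_nonneg _) (fun n => ?_) hgt
    have h1 := est1 n (kn n)
    have h2 : ‖y n (inn n) - p‖ ^ 2 ≤ ‖uu n (kn n) - p‖ ^ 2 := by
      nlinarith [hyp n (inn n), norm_nonneg (y n (inn n) - p), norm_nonneg (uu n (kn n) - p)]
    have h3 : ‖z n - p‖ ^ 2 ≤ ‖x n - p‖ ^ 2 := by
      nlinarith [hzp n, norm_nonneg (z n - p), norm_nonneg (x n - p)]
    have h4 := hDle n
    have h5 : lam * (2 * α - lam) * ‖A (kn n) (z n) - A (kn n) p‖ ^ 2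
        ≤ 2 * B * ‖y n (inn n) - x n‖ := by nlinarith
    rw [le_div_iff₀ hposc]
    nlinarith
  have dδ : Tendsto (fun n => ‖A (kn n) (z n) - A (kn n) p‖) atTop (𝓝 0) :=
    tendsto_of_sq_tendsto (fun n => norm_nonneg _) dδsq
  -- ‖z_n - ū_n‖ → 0
  have hBzu : ∀ n, ‖z n - uu n (kn n)‖ ≤ 2 * B := by
    intro n
    have h1 : ‖z n - uu n (kn n)‖ ≤ ‖z n - p‖ + ‖p - uu n (kn n)‖ := by
      have := norm_add_le (z n - p) (p - uu n (kn n))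
      simpa using this
    have h2 : ‖p - uu n (kn n)‖ = ‖uu n (kn n) - p‖ := norm_sub_rev _ _
    linarith [hBz n, hBu n]
  have dzu_sq : Tendsto (fun n => ‖z n - uu n (kn n)‖ ^ 2) atTop (𝓝 0) := by
    have hgt : Tendsto
        (fun n => 2 * B * ‖y n (inn n) - x n‖
          + 2 * lam * (2 * B) * ‖A (kn n) (z n) - A (kn n) p‖) atTop (𝓝 0) := by
      have h := (dyx.const_mul (2 * B)).add (dδ.const_mul (2 * lam * (2 * B)))
      simpa using h
    refine squeeze_zero (fun n => sq_nonneg _) (fun n => ?_) hgt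
    show ‖z n - uu n (kn n)‖ ^ 2 ≤ 2 * B * ‖y n (inn n) - x n‖
      + 2 * lam * (2 * B) * ‖A (kn n) (z n) - A (kn n) p‖
    have h1 := est2 n
    have h2 : ‖y n (inn n) - p‖ ^ 2 ≤ ‖uu n (kn n) - p‖ ^ 2 := by
      nlinarith [hyp n (inn n), norm_nonneg (y n (inn n) - p), norm_nonneg (uu n (kn n) - p)]
    have h3 : ‖z n - p‖ ^ 2 ≤ ‖x n - p‖ ^ 2 := by
      nlinarith [hzp n, norm_nonneg (z n - p), norm_nonneg (x n - p)]
    have h4 := hDle n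
    have h5a : (2 * lam) * ‖z n - uu n (kn n)‖ ≤ (2 * lam) * (2 * B) :=
      mul_le_mul_of_nonneg_left (hBzu n) (by linarith)
    have h5 := mul_le_mul_of_nonneg_right h5a
      (norm_nonneg (A (kn n) (z n) - A (kn n) p))
    linarith
  have dzu : Tendsto (fun n => ‖z n - uu n (kn n)‖) atTop (𝓝 0) :=
    tendsto_of_sq_tendsto (fun n => norm_nonneg _) dzu_sq
  -- ‖z_n - x_n‖ → 0 and ‖ū_n - x_n‖ → 0
  have dzx : Tendsto (fun n => ‖z n - x n‖) atTop (𝓝 0) :=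
    squeeze_zero (fun n => norm_nonneg _) (fun n => (hz n).2 _ (hyC n (inn n))) dyx
  have dux : Tendsto (fun n => ‖uu n (kn n) - x n‖) atTop (𝓝 0) := by
    have hgt : Tendsto (fun n => ‖z n - uu n (kn n)‖ + ‖z n - x n‖) atTop (𝓝 0) := by
      simpa using dzu.add dzx
    refine squeeze_zero (fun n => norm_nonneg _) (fun n => ?_) hgt
    have h1 : ‖uu n (kn n) - x n‖ ≤ ‖uu n (kn n) - z n‖ + ‖z n - x n‖ := by
      have h := norm_add_le (uu n (kn n) - z n) (z n - x n)
      rw [sub_add_sub_cancel] at h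
      exact h
    rw [norm_sub_rev (uu n (kn n)) (z n)] at h1
    exact h1
  -- each ‖y_n^i - x_n‖ → 0
  have dyi : Tendsto (fun n => ‖y n i - x n‖) atTop (𝓝 0) :=
    squeeze_zero (fun n => norm_nonneg _) (fun n => hin n i) dyx
  -- eventual bound on a_n
  set b : ℝ := (Filter.limsup a Filter.atTop + 1) / 2 with hbdef
  have hb1 : b < 1 := by rw [hbdef]; linarith
  have hab : Filter.limsup a Filter.atTop < b := by rw [hbdef]; linarith
  have hev : ∀ᶠ n in atTop, a n < b :=
    eventually_lt_of_limsup_lt hab (isBoundedUnder_of ⟨1, fun n => (ha n).2⟩)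
  -- ‖S_i ū_n - ū_n‖ → 0
  have hyub : ∀ n, y n i - uu n (kn n)
      = (1 - a n) • (S i (uu n (kn n)) - uu n (kn n)) := by
    intro n
    rw [hy]
    module
  have dSu : Tendsto (fun n => ‖S i (uu n (kn n)) - uu n (kn n)‖) atTop (𝓝 0) := by
    have hg : Tendsto (fun n => (‖y n i - x n‖ + ‖uu n (kn n) - x n‖) / (1 - b))
        atTop (𝓝 0) := by
      have := (dyi.add dux).div_const (1 - b)
      simpa using this
    apply squeeze_zero' (Eventually.of_forall fun n => norm_nonneg _) ?_ hg
    filter_upwards [hev] with n hn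
    have h1 : ‖y n i - uu n (kn n)‖
        = (1 - a n) * ‖S i (uu n (kn n)) - uu n (kn n)‖ := by
      rw [hyub n, norm_smul, Real.norm_eq_abs, abs_of_nonneg (by linarith [(ha n).2])]
    have h2 : ‖y n i - uu n (kn n)‖ ≤ ‖y n i - x n‖ + ‖uu n (kn n) - x n‖ := by
      have := norm_sub_le (y n i - x n) (uu n (kn n) - x n)
      have e : (y n i - x n) - (uu n (kn n) - x n) = y n i - uu n (kn n) := by abel
      rwa [e] at this
    have h3 : (0:ℝ) < 1 - b := by linarith
    rw [le_div_iff₀ h3]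
    nlinarith [norm_nonneg (S i (uu n (kn n)) - uu n (kn n))]
  -- conclusion
  apply squeeze_zero (fun n => norm_nonneg _) (fun n => ?_)
    (by
      have h := (dzu.const_mul 2).add dSu
      simpa using h)
  have t1 : ‖S i (uu n (kn n)) - S i (z n)‖ ≤ ‖uu n (kn n) - z n‖ :=
    hS i _ (huC n (kn n)) _ (hzC n)
  have t2 : ‖z n - S i (z n)‖
      ≤ ‖z n - uu n (kn n)‖ + ‖uu n (kn n) - S i (uu n (kn n))‖
        + ‖S i (uu n (kn n)) - S i (z n)‖ := by
    have e : z n - S i (z n)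
        = (z n - uu n (kn n)) + (uu n (kn n) - S i (uu n (kn n)))
          + (S i (uu n (kn n)) - S i (z n)) := by abel
    rw [e]
    exact (norm_add_le _ _).trans (by gcongr; exact norm_add_le _ _)
  have t3 : ‖uu n (kn n) - S i (uu n (kn n))‖ = ‖S i (uu n (kn n)) - uu n (kn n)‖ :=
    norm_sub_rev _ _
  have t4 : ‖uu n (kn n) - z n‖ = ‖z n - uu n (kn n)‖ := norm_sub_rev _ _
  rw [t3] at t2
  rw [t4] at t1
  linarith
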